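/- Let φ and ψ be finite potent endomorphisms of a k-vector space V such that (1+φ)∘(1+ψ) = id_V = (1+ψ)∘(1+φ). Let A ⊆ End_k(V) be the unital k-subalgebra generated by φ and ψ, and let F = φ∘A + ψ∘A. Then F is a finite potent subspace of End_k(V). -/

import Mathlib

/-- A subspace `F ⊆ End_k(V)` is a *finite potent subspace* if there is `n ≥ 1` such that
any composition of `n` elements of `F` has finite-dimensional image. -/
def IsFinitePotentSubspace {k V : Type*} [Field k] [AddCommGroup V] [Module k V]
    (F : Submodule k (V →ₗ[k] V)) : Prop :=
  ∃ n : ℕ, 1 ≤ n ∧ ∀ f : Fin n → (V →ₗ[k] V), (∀ i, f i ∈ F) →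
    FiniteDimensional k (LinearMap.range (List.ofFn f).prod)


/-!
Since `(1 + φ)(1 + ψ) = (1 + ψ)(1 + φ)`, the endomorphisms `φ` and `ψ` commute, so `A` is a
commutative ring and `F` lies in its ideal `𝔞 = (φ, ψ)`. The elements of `A` of finite rank form
an ideal `J` containing `φ ^ m` and `ψ ^ n`; thus `𝔞 ≤ √J`, and as `𝔞` is finitely generated,
`𝔞 ^ N ≤ J` for some `N`. Any product of `N` elements of `F` lies in `𝔞 ^ N`.
-/

open scoped IsMulCommutative

theorem Commute.of_one_add {R : Type*} [Ring R] {x y : R} (h : Commute (1 + x) (1 + y)) :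
    Commute x y := by
  simpa using (h.sub_left (Commute.one_left _)).sub_right (Commute.one_right _)

theorem Algebra.isMulCommutative_adjoin_pair {R A : Type*} [CommSemiring R] [Semiring A]
    [Algebra R A] {x y : A} (h : Commute x y) : IsMulCommutative (adjoin R {x, y}) :=
  isMulCommutative_adjoin R <| by
    simp only [Set.mem_insert_iff, Set.mem_singleton_iff]
    rintro _ (rfl | rfl) _ (rfl | rfl)
    exacts [rfl, h.eq, h.eq.symm, rfl]

theorem Ideal.exists_pow_span_pair_le {R : Type*} [CommSemiring R] {I : Ideal R} {x y : R}
    {m n : ℕ} (hx : x ^ m ∈ I) (hy : y ^ n ∈ I) : ∃ N, span {x, y} ^ N ≤ I := by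
  refine exists_pow_le_of_le_radical_of_fg ?_ (Submodule.fg_span (Set.toFinite _))
  rw [span_le, Set.insert_subset_iff, Set.singleton_subset_iff]
  exact ⟨⟨m, hx⟩, ⟨n, hy⟩⟩

theorem Ideal.prod_mem_pow_card {R ι : Type*} [CommSemiring R] [Fintype ι] {I : Ideal R}
    {x : ι → R} (hx : ∀ i, x i ∈ I) : ∏ i, x i ∈ I ^ Fintype.card ι := by
  simpa using prod_mem_prod (s := Finset.univ) (I := fun _ => I) fun i _ => hx i

theorem Subalgebra.exists_mem_span_pair_of_mem_sup_map_mulLeft {k R : Type*} [CommRing k]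
    [Ring R] [Algebra k R] {A : Subalgebra k R} [IsMulCommutative A] {x y : A} {f : R}
    (hf : f ∈ Submodule.map (LinearMap.mulLeft k (x : R)) (Subalgebra.toSubmodule A)
      ⊔ Submodule.map (LinearMap.mulLeft k (y : R)) (Subalgebra.toSubmodule A)) :
    ∃ g ∈ Ideal.span {x, y}, (g : R) = f := by
  obtain ⟨_, ⟨a, ha, rfl⟩, _, ⟨b, hb, rfl⟩, rfl⟩ := Submodule.mem_sup.mp hf
  exact ⟨x * ⟨a, ha⟩ + y * ⟨b, hb⟩, Ideal.mem_span_pair.mpr ⟨⟨a, ha⟩, ⟨b, hb⟩, by ring⟩, rfl⟩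

namespace Module.End

variable (k V : Type*) [DivisionRing k] [AddCommGroup V] [Module k V]

def finiteRankIdeal : Ideal (Module.End k V) where
  carrier := {f | FiniteDimensional k (LinearMap.range f)}
  zero_mem' := by
    change FiniteDimensional k (LinearMap.range (0 : V →ₗ[k] V))
    rw [LinearMap.range_zero]
    infer_instance
  add_mem' {f g} (hf : FiniteDimensional k _) (hg : FiniteDimensional k _) :=
    Submodule.finiteDimensional_of_le (LinearMap.range_add_le f g)
  smul_mem' g f (hf : FiniteDimensional k _) := by
    change FiniteDimensional k (LinearMap.range (g ∘ₗ f))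
    rw [LinearMap.range_comp]
    infer_instance

end Module.End

/-- if `φ`, `ψ` are finite potent with `(1+φ)(1+ψ) = 1 = (1+ψ)(1+φ)`, and `A` is the
unital subalgebra of `End_k(V)` generated by `φ` and `ψ`, then `F = φ∘A + ψ∘A` is a
finite potent subspace of `End_k(V)`. -/
theorem isFinitePotentSubspace_of_inverse
    {k V : Type*} [Field k] [AddCommGroup V] [Module k V]
    (φ ψ : V →ₗ[k] V)
    (hφ : ∃ n : ℕ, 1 ≤ n ∧ FiniteDimensional k (LinearMap.range (φ ^ n)))
    (hψ : ∃ n : ℕ, 1 ≤ n ∧ FiniteDimensional k (LinearMap.range (ψ ^ n)))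
    (hinv : (1 + φ) * (1 + ψ) = 1 ∧ (1 + ψ) * (1 + φ) = 1)
    (A : Subalgebra k (V →ₗ[k] V)) (hA : A = Algebra.adjoin k {φ, ψ})
    (F : Submodule k (V →ₗ[k] V))
    (hF : F = Submodule.map (LinearMap.mulLeft k φ) (Subalgebra.toSubmodule A)
            ⊔ Submodule.map (LinearMap.mulLeft k ψ) (Subalgebra.toSubmodule A)) :
    IsFinitePotentSubspace F := by
  obtain ⟨m, -, hm⟩ := hφ
  obtain ⟨n, -, hn⟩ := hψ
  have hcomm : Commute φ ψ := Commute.of_one_add (hinv.1.trans hinv.2.symm)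
  have : IsMulCommutative A := hA ▸ Algebra.isMulCommutative_adjoin_pair hcomm
  let x : A := ⟨φ, hA ▸ Algebra.subset_adjoin (by simp)⟩
  let y : A := ⟨ψ, hA ▸ Algebra.subset_adjoin (by simp)⟩
  obtain ⟨N, hN⟩ : ∃ N, Ideal.span {x, y} ^ N ≤ (Module.End.finiteRankIdeal k V).comap A.val :=
    Ideal.exists_pow_span_pair_le (x := x) (y := y) hm hn
  refine ⟨N + 1, N.succ_pos, fun f hf => ?_⟩
  choose g hg hgf using fun i =>
    Subalgebra.exists_mem_span_pair_of_mem_sup_map_mulLeft (x := x) (y := y) (hF ▸ hf i)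
  obtain rfl : f = A.val ∘ g := funext fun i => (hgf i).symm
  rw [← List.map_ofFn, ← map_list_prod, List.prod_ofFn]
  refine hN (Ideal.pow_le_pow_right N.le_succ ?_)
  simpa using Ideal.prod_mem_pow_card hg
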